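/- arXiv:math/0607391 — 3 statements merged into one kernel-verified Lean document; each statement's English description precedes it below -/
import Mathlib

section
/- The subspace {f ∈ End(ℂ𝔖_n) : (1 − σ̄_i)·f·(1 + σ̄_i) = 0 for all i = 1,…,n−1} (products composed left to right) has dimension equal to the number of pairs (μ, ν) of permutations of {1,…,n} with Des(μ) ∩ Des(ν) = ∅; equivalently, the linear relations on End(ℂ𝔖_n) cutting out this subspace, indexed by pairs of permutations having a common descent, are linearly independent. -/
open scoped Classical

set_option maxHeartbeats 1000000
set_option synthInstance.maxHeartbeats 400000

noncomputable section

/-- The symmetric group on `{1, …, n}`, 0-indexed as permutations of `Fin n`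
(so positions/descents are indexed by `i ∈ {0, …, n-2}` instead of `{1, …, n-1}`). -/
abbrev PermN (n : ℕ) := Equiv.Perm (Fin n)

/-- The vector space `ℂ𝔖ₙ` with basis the symmetric group. -/
abbrev CS (n : ℕ) := Equiv.Perm (Fin n) →₀ ℂ

/-- The elementary transposition `sᵢ` exchanging `i` and `i+1` (0-indexed). -/
def swapAt (n i : ℕ) (h : i + 1 < n) : PermN n :=
  Equiv.swap ⟨i, Nat.lt_of_succ_lt h⟩ ⟨i + 1, h⟩

/-- The operator `σᵢ` on `ℂ𝔖ₙ`: right multiplication by `sᵢ` (action on positions),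
`μ ↦ μ sᵢ`. -/
def sigmaOp (n i : ℕ) : Module.End ℂ (CS n) :=
  if h : i + 1 < n then Finsupp.lmapDomain ℂ ℂ (fun μ => μ * swapAt n i h) else 1

/-- The elementary decreasing sorting operator `πᵢ` on `ℂ𝔖ₙ`:
`μ ↦ μ` if `μᵢ > μᵢ₊₁` and `μ ↦ μ sᵢ` otherwise. -/
def piOp (n i : ℕ) : Module.End ℂ (CS n) :=
  if h : i + 1 < n then
    Finsupp.lmapDomain ℂ ℂ (fun μ : PermN n =>
      if μ ⟨i + 1, h⟩ < μ ⟨i, Nat.lt_of_succ_lt h⟩ then μ else μ * swapAt n i h)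
  else 1

/-- The operator `σ̄ᵢ` on `ℂ𝔖ₙ`: left multiplication by `sᵢ` (action on values),
`μ ↦ sᵢ μ`. -/
def sigmaBarOp (n i : ℕ) : Module.End ℂ (CS n) :=
  if h : i + 1 < n then Finsupp.lmapDomain ℂ ℂ (fun μ => swapAt n i h * μ) else 1

/-- The operator `σ_σ` of right multiplication by a permutation `σ`
(equal to the product of the `σᵢ` along any reduced word for `σ`). -/
def rightMulOp (n : ℕ) (σ : PermN n) : Module.End ℂ (CS n) :=
  Finsupp.lmapDomain ℂ ℂ (fun μ => μ * σ)

/-- The algebra `H𝔖ₙ`: the subalgebra of `End(ℂ𝔖ₙ)` generated by the operators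
`σ₁, …, σ_{n-1}, π₁, …, π_{n-1}`.

Note on conventions: the paper composes operators left to right, `v·(fg) = (v·f)·g`,
while multiplication in `Module.End` is `(f * g) v = f (g v)`.  Hence the paper's
product `f·g` is `g * f` here.  This does not affect the generated subalgebra. -/
def HS (n : ℕ) : Subalgebra ℂ (Module.End ℂ (CS n)) :=
  Algebra.adjoin ℂ
    ({f | ∃ i, ∃ _ : i + 1 < n, f = sigmaOp n i} ∪ {f | ∃ i, ∃ _ : i + 1 < n, f = piOp n i})

/-- The descent set `Des(μ) = {i : μᵢ > μᵢ₊₁}` (0-indexed positions). -/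
def Des (n : ℕ) (μ : PermN n) : Set ℕ :=
  {i | ∃ h : i + 1 < n, μ ⟨i + 1, h⟩ < μ ⟨i, Nat.lt_of_succ_lt h⟩}


-- Helper instances (present in Mathlib, but provided here explicitly to avoid
-- very deep instance searches on `Module.End ℂ (CS n)`).
noncomputable instance (priority := 10000) endSubACG (n : ℕ)
    (N : Submodule ℂ (Module.End ℂ (CS n))) : AddCommGroup ↥N :=
  @Submodule.addCommGroup ℂ (Module.End ℂ (CS n)) _ _ _ N

noncomputable instance (priority := 10000) subalgRing (n : ℕ)
    (S : Subalgebra ℂ (Module.End ℂ (CS n))) : Ring ↥S :=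
  @Subalgebra.toRing ℂ (Module.End ℂ (CS n)) _ _ _ S

noncomputable instance (priority := 10000) subalgACG (n : ℕ)
    (S : Subalgebra ℂ (Module.End ℂ (CS n))) : AddCommGroup ↥S :=
  (subalgRing n S).toAddCommGroup

noncomputable instance (priority := 10000) subalgMod (n : ℕ)
    (S : Subalgebra ℂ (Module.End ℂ (CS n))) : Module ℂ ↥S :=
  (Subalgebra.toSubmodule S).module'

/-- The subspace of `End(ℂ𝔖ₙ)` cut out by the sandwich equations
`(1 - σ̄ᵢ)·f·(1 + σ̄ᵢ) = 0` (left-to-right composition). -/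
def sandwichSpace (n : ℕ) : Submodule ℂ (Module.End ℂ (CS n)) :=
  ⨅ i : {i : ℕ // i + 1 < n},
    LinearMap.ker ((LinearMap.mulLeft ℂ (1 + sigmaBarOp n i.1)).comp
      (LinearMap.mulRight ℂ (1 - sigmaBarOp n i.1)))

/-!
Write `M μ ν` for the matrix entries of `f` in the basis `𝔖ₙ`; the sandwich equation for `sᵢ`
reads `M μ ν + M (sᵢμ) ν = M μ (sᵢν) + M (sᵢμ) (sᵢν)`. When `i` is a common left descent of
`μ` and `ν`, it expresses `M μ ν` through entries with fewer inversions, so a solution is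
determined by its entries at pairs without a common left descent.

Conversely, for such a pair `(α, β)` let `D` be the left descent set of `β` and `W_D` the Young
subgroup it generates. The signed indicator of the coset `W_D α` times the indicator of
`W_{Dᶜ} β` solves all sandwich equations, and since `α` and `β` are the minimal elements of their
cosets, these solutions are triangular with respect to the number of inversions. Left descents
of `μ` are the descents of `μ⁻¹`.
-/

open Equiv Finset

theorem linearIndependent_of_triangular {ι R M : Type*} [Ring R] [NoZeroDivisors R]
    [AddCommGroup M] [Module R M] (v : ι → M) (φ : ι → M →ₗ[R] R) (w : ι → ℕ)
    (hdiag : ∀ i, φ i (v i) ≠ 0) (htri : ∀ i j, j ≠ i → φ i (v j) ≠ 0 → w j < w i) :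
    LinearIndependent R v := by
  rw [linearIndependent_iff']
  intro s g hsum i
  induction hwi : w i using Nat.strong_induction_on generalizing i with
  | _ m ih =>
    intro hi
    have hφ := congrArg (φ i) hsum
    rw [map_sum, map_zero, Finset.sum_eq_single i] at hφ
    · rw [map_smul, smul_eq_mul] at hφ
      exact (mul_eq_zero.1 hφ).resolve_right (hdiag i)
    · intro j hj hji
      rw [map_smul, smul_eq_mul]
      by_cases hφj : φ i (v j) = 0
      · rw [hφj, mul_zero]
      · rw [ih (w j) (hwi ▸ htri i j hji hφj) j rfl hj, zero_mul]
    · exact fun h => absurd hi h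

section SameBlock

/-- `a` and `b` lie in the same block of the partition of `ℕ` into intervals cut at the
steps `i ∉ D`. -/
def SameBlock (D : Set ℕ) (a b : ℕ) : Prop := ∀ i, min a b ≤ i → i < max a b → i ∈ D

variable {D : Set ℕ} {a b c a' b' : ℕ}

theorem SameBlock.refl (D : Set ℕ) (a : ℕ) : SameBlock D a a := fun _ h₁ h₂ => by omega

theorem SameBlock.symm (h : SameBlock D a b) : SameBlock D b a :=
  fun i h₁ h₂ => h i (by omega) (by omega)

theorem SameBlock.trans (hab : SameBlock D a b) (hbc : SameBlock D b c) : SameBlock D a c :=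
  fun i h₁ h₂ => by
  by_cases hi : min a b ≤ i ∧ i < max a b
  · exact hab i hi.1 hi.2
  · exact hbc i (by omega) (by omega)

theorem lt_of_not_sameBlock (hab : a < b) (hnot : ¬ SameBlock D a b) (ha : SameBlock D a a')
    (hb : SameBlock D b b') : a' < b' := by
  obtain ⟨i, h₁, h₂, hi⟩ : ∃ i, min a b ≤ i ∧ i < max a b ∧ i ∉ D := by
    simpa [SameBlock] using hnot
  by_contra! hba
  rcases le_or_gt a' i with h | h
  · exact hi (hb i (by omega) (by omega))
  · exact hi (ha i (by omega) (by omega))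

end SameBlock

variable {n : ℕ}

/-- The Young subgroup `W_D` generated by the `sᵢ` with `i ∈ D`: the permutations of values
preserving every block of `SameBlock D`. -/
def youngSubgroup (n : ℕ) (D : Set ℕ) : Subgroup (PermN n) where
  carrier := {w | ∀ x : Fin n, SameBlock D x (w x)}
  mul_mem' {v w} hv hw x := (hw x).trans (hv (w x))
  one_mem' x := SameBlock.refl D x
  inv_mem' {w} hw x := by simpa using (hw (w⁻¹ x)).symm

theorem swapAt_mem_youngSubgroup {D : Set ℕ} {i : ℕ} (h : i + 1 < n) (hi : i ∈ D) :
    swapAt n i h ∈ youngSubgroup n D := by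
  intro x j h₁ h₂
  obtain rfl : j = i := by
    rcases x with ⟨x, hx⟩
    simp only [swapAt, Equiv.swap_apply_def, Fin.ext_iff] at h₁ h₂
    split_ifs at h₁ h₂ <;> simp_all <;> omega
  exact hi

def inversions (μ : PermN n) : Finset (Fin n × Fin n) :=
  univ.filter fun q => q.1 < q.2 ∧ μ q.2 < μ q.1

theorem mem_inversions {μ : PermN n} {q : Fin n × Fin n} :
    q ∈ inversions μ ↔ q.1 < q.2 ∧ μ q.2 < μ q.1 := by
  simp [inversions]

section Coset

variable {D : Set ℕ} {α μ : PermN n}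

theorem inv_lt_inv_of_sameBlock (hα : ∀ i ∈ D, i ∉ Des n α⁻¹) {x y : Fin n} (hxy : x < y)
    (hj : SameBlock D x y) : α⁻¹ x < α⁻¹ y := by
  rcases y with ⟨y, hy⟩
  induction y with
  | zero => exact absurd (Fin.lt_def.1 hxy) (Nat.not_lt_zero _)
  | succ m ih =>
    have hxm : (x : ℕ) ≤ m := Nat.lt_succ_iff.1 hxy
    have hm : m ∈ D := hj m (by dsimp only; omega) (by dsimp only; omega)
    have hstep : α⁻¹ ⟨m, by omega⟩ < α⁻¹ ⟨m + 1, hy⟩ := by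
      have hnd := hα m hm
      simp only [Des, Set.mem_ofPred_eq, not_exists, not_lt] at hnd
      exact lt_of_le_of_ne (hnd hy) (α⁻¹.injective.ne (by simp))
    rcases hxm.lt_or_eq with hlt | heq
    · have hjm : SameBlock D x m := fun i h₁ h₂ =>
        hj i (by dsimp only; omega) (by dsimp only; omega)
      exact (ih (by omega) hlt hjm).trans hstep
    · convert hstep

theorem inversions_subset_of_mem_coset (hα : ∀ i ∈ D, i ∉ Des n α⁻¹)
    (hμ : μ * α⁻¹ ∈ youngSubgroup n D) : inversions α ⊆ inversions μ := by
  intro ⟨p, q⟩ hpq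
  rw [mem_inversions] at hpq ⊢
  refine ⟨hpq.1, ?_⟩
  have hnot : ¬ SameBlock D (α q) (α p) := fun hj =>
    lt_asymm hpq.1 (by simpa using inv_lt_inv_of_sameBlock hα hpq.2 hj)
  simpa using lt_of_not_sameBlock hpq.2 hnot (hμ (α q)) (hμ (α p))

theorem card_inversions_lt_of_mem_coset (hα : ∀ i ∈ D, i ∉ Des n α⁻¹)
    (hμ : μ * α⁻¹ ∈ youngSubgroup n D) (hne : μ ≠ α) : #(inversions α) < #(inversions μ) := by
  apply card_lt_card
  rw [ssubset_iff_of_subset (inversions_subset_of_mem_coset hα hμ)]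
  set w := μ * α⁻¹ with hw
  obtain ⟨x, y, hxy, hwyx⟩ : ∃ x y, x < y ∧ w y < w x := by
    by_contra! hmono
    refine hne (mul_inv_eq_one.1 (Equiv.ext fun x => congrFun (StrictMono.eq_id ?_) x))
    exact fun x y hxy => lt_of_le_of_ne (hmono x y hxy) (w.injective.ne hxy.ne)
  have hj : SameBlock D x y := by
    by_contra hj
    exact lt_asymm hwyx (lt_of_not_sameBlock hxy hj (hμ x) (hμ y))
  refine ⟨(α⁻¹ x, α⁻¹ y), ?_, ?_⟩
  · rw [mem_inversions]
    exact ⟨inv_lt_inv_of_sameBlock hα hxy hj, by simpa [hw] using hwyx⟩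
  · rw [mem_inversions]
    simpa using fun _ => hxy.le

end Coset

theorem swapAt_mul_swapAt_mul {i : ℕ} (h : i + 1 < n) (μ : PermN n) :
    swapAt n i h * (swapAt n i h * μ) = μ := by
  rw [← mul_assoc, swapAt, swap_mul_self, one_mul]

theorem card_inversions_swapAt_mul_lt {i : ℕ} (h : i + 1 < n) {μ : PermN n}
    (hi : i ∈ Des n μ⁻¹) : #(inversions (swapAt n i h * μ)) < #(inversions μ) := by
  refine card_inversions_lt_of_mem_coset (D := {i}) ?_ ?_ ?_
  · rintro j rfl ⟨_, hd⟩
    obtain ⟨_, hd₀⟩ := hi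
    simp only [swapAt, mul_inv_rev, swap_inv, Perm.coe_mul, Perm.coe_inv, Function.comp_apply,
      swap_apply_right, swap_apply_left] at hd
    exact lt_asymm hd hd₀
  · simpa [swapAt] using swapAt_mem_youngSubgroup h (Set.mem_singleton i)
  · rw [Ne, right_eq_mul, swapAt, swap_eq_one_iff]
    simp

def sandwichMatrices (n : ℕ) : Submodule ℂ (Matrix (PermN n) (PermN n) ℂ) where
  carrier := {M | ∀ i (h : i + 1 < n) μ ν, M μ ν + M (swapAt n i h * μ) ν =
    M μ (swapAt n i h * ν) + M (swapAt n i h * μ) (swapAt n i h * ν)}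
  add_mem' {M N} hM hN i h μ ν := by
    simp only [Matrix.add_apply]
    linear_combination hM i h μ ν + hN i h μ ν
  zero_mem' _ _ _ _ := by simp
  smul_mem' c M hM i h μ ν := by
    simp only [Matrix.smul_apply, smul_eq_mul]
    linear_combination c * hM i h μ ν

theorem vecMulVec_mem_sandwichMatrices (g g' : PermN n → ℂ)
    (hg : ∀ i (h : i + 1 < n), (∀ μ, g (swapAt n i h * μ) = -g μ) ∨
      ∀ ν, g' (swapAt n i h * ν) = g' ν) :
    Matrix.vecMulVec g g' ∈ sandwichMatrices n := by
  intro i h μ ν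
  simp only [Matrix.vecMulVec_apply]
  rcases hg i h with hanti | hsymm
  · rw [hanti]
    ring
  · rw [hsymm]

theorem eq_zero_of_mem_sandwichMatrices {M : Matrix (PermN n) (PermN n) ℂ}
    (hM : M ∈ sandwichMatrices n) (h₀ : ∀ μ ν, Des n μ⁻¹ ∩ Des n ν⁻¹ = ∅ → M μ ν = 0) :
    M = 0 := by
  suffices ∀ N μ ν, #(inversions μ) + #(inversions ν) < N → M μ ν = 0 from
    Matrix.ext fun μ ν => this _ μ ν (Nat.lt_succ_self _)
  intro N
  induction N with
  | zero => intros; omega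
  | succ N ih =>
    intro μ ν hlt
    by_cases hdisj : Des n μ⁻¹ ∩ Des n ν⁻¹ = ∅
    · exact h₀ μ ν hdisj
    obtain ⟨i, hiμ, hiν⟩ := Set.nonempty_iff_ne_empty.2 hdisj
    have h : i + 1 < n := hiμ.1
    have hμ := card_inversions_swapAt_mul_lt h hiμ
    have hν := card_inversions_swapAt_mul_lt h hiν
    have hrel := hM i h μ (swapAt n i h * ν)
    rw [swapAt_mul_swapAt_mul] at hrel
    rw [ih μ _ (by omega), ih (swapAt n i h * μ) _ (by omega),
      ih (swapAt n i h * μ) ν (by omega)] at hrel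
    linear_combination -hrel

def signedCosetIndicator (D : Set ℕ) (α μ : PermN n) : ℂ :=
  if μ * α⁻¹ ∈ youngSubgroup n D then (Perm.sign (μ * α⁻¹) : ℤ) else 0

def cosetIndicator (D : Set ℕ) (β ν : PermN n) : ℂ :=
  if ν * β⁻¹ ∈ youngSubgroup n D then 1 else 0

section CosetIndicator

variable {D : Set ℕ} {i : ℕ} (h : i + 1 < n) (hi : i ∈ D) (α μ : PermN n)
include h hi

theorem signedCosetIndicator_swapAt_mul :
    signedCosetIndicator D α (swapAt n i h * μ) = -signedCosetIndicator D α μ := by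
  have hsign : Perm.sign (swapAt n i h) = -1 := Perm.sign_swap (by simp)
  simp only [signedCosetIndicator, mul_assoc,
    Subgroup.mul_mem_cancel_left _ (swapAt_mem_youngSubgroup h hi), Perm.sign_mul, hsign]
  split_ifs <;> simp

theorem cosetIndicator_swapAt_mul :
    cosetIndicator D α (swapAt n i h * μ) = cosetIndicator D α μ := by
  simp only [cosetIndicator, mul_assoc,
    Subgroup.mul_mem_cancel_left _ (swapAt_mem_youngSubgroup h hi)]

end CosetIndicator

def cosetSolution (p : PermN n × PermN n) : Matrix (PermN n) (PermN n) ℂ :=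
  Matrix.vecMulVec (signedCosetIndicator (Des n p.2⁻¹) p.1) (cosetIndicator (Des n p.2⁻¹)ᶜ p.2)

theorem cosetSolution_mem_sandwichMatrices (p : PermN n × PermN n) :
    cosetSolution p ∈ sandwichMatrices n := by
  refine vecMulVec_mem_sandwichMatrices _ _ fun i h => ?_
  by_cases hi : i ∈ Des n p.2⁻¹
  · exact Or.inl (signedCosetIndicator_swapAt_mul h hi p.1)
  · exact Or.inr (cosetIndicator_swapAt_mul h hi p.2)

theorem cosetSolution_self (p : PermN n × PermN n) : cosetSolution p p.1 p.2 = 1 := by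
  simp [cosetSolution, Matrix.vecMulVec_apply, signedCosetIndicator, cosetIndicator, one_mem]

theorem card_inversions_lt_of_cosetSolution_ne_zero {α β μ ν : PermN n}
    (hp : Des n α⁻¹ ∩ Des n β⁻¹ = ∅) (hne : (μ, ν) ≠ (α, β))
    (hsol : cosetSolution (α, β) μ ν ≠ 0) :
    #(inversions α) + #(inversions β) < #(inversions μ) + #(inversions ν) := by
  have hμ : μ * α⁻¹ ∈ youngSubgroup n (Des n β⁻¹) := by
    by_contra hμ
    simp [cosetSolution, Matrix.vecMulVec_apply, signedCosetIndicator, hμ] at hsol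
  have hν : ν * β⁻¹ ∈ youngSubgroup n (Des n β⁻¹)ᶜ := by
    by_contra hν
    simp [cosetSolution, Matrix.vecMulVec_apply, cosetIndicator, hν] at hsol
  have hα : ∀ i ∈ Des n β⁻¹, i ∉ Des n α⁻¹ := fun i hiβ hiα =>
    (Set.eq_empty_iff_forall_notMem.1 hp) i ⟨hiα, hiβ⟩
  have hβ : ∀ i ∈ (Des n β⁻¹)ᶜ, i ∉ Des n β⁻¹ := fun _ hi => hi
  have hαμ := card_le_card (inversions_subset_of_mem_coset hα hμ)
  have hβν := card_le_card (inversions_subset_of_mem_coset hβ hν)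
  by_cases hμα : μ = α
  · have hνβ : ν ≠ β := fun hνβ => hne (by rw [hμα, hνβ])
    have := card_inversions_lt_of_mem_coset hβ hν hνβ
    omega
  · have := card_inversions_lt_of_mem_coset hα hμ hμα
    omega

abbrev NoCommonLeftDescent (n : ℕ) := {p : PermN n × PermN n // Des n p.1⁻¹ ∩ Des n p.2⁻¹ = ∅}

theorem linearIndependent_cosetSolution :
    LinearIndependent ℂ fun p : NoCommonLeftDescent n => cosetSolution p.1 :=
  linearIndependent_of_triangular _ (fun q => Matrix.entryLinearMap ℂ ℂ q.1.1 q.1.2)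
    (fun p => #(inversions p.1.1) + #(inversions p.1.2))
    (fun p => by simp [cosetSolution_self])
    (fun q p hpq hsol => card_inversions_lt_of_cosetSolution_ne_zero p.2
      (fun h => hpq (Subtype.ext h.symm)) hsol)

theorem finrank_sandwichMatrices (n : ℕ) :
    Module.finrank ℂ (sandwichMatrices n) =
      Fintype.card (NoCommonLeftDescent n) := by
  refine le_antisymm ?_ ?_
  · let restrict := LinearMap.pi fun p : NoCommonLeftDescent n =>
      (Matrix.entryLinearMap ℂ ℂ p.1.1 p.1.2).comp (sandwichMatrices n).subtype
    rw [← Module.finrank_fintype_fun_eq_card ℂ]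
    refine LinearMap.finrank_le_finrank_of_injective (f := restrict) ?_
    rw [← LinearMap.ker_eq_bot, LinearMap.ker_eq_bot']
    exact fun M hM => Subtype.ext <|
      eq_zero_of_mem_sandwichMatrices M.2 fun μ ν h => congrFun hM ⟨(μ, ν), h⟩
  · refine LinearIndependent.fintype_card_le_finrank
      (b := fun p => ⟨cosetSolution p.1, cosetSolution_mem_sandwichMatrices p.1⟩) ?_
    exact .of_comp (sandwichMatrices n).subtype linearIndependent_cosetSolution

def endMatrix (n : ℕ) : Module.End ℂ (CS n) ≃ₗ[ℂ] Matrix (PermN n) (PermN n) ℂ :=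
  LinearMap.toMatrix Finsupp.basisSingleOne Finsupp.basisSingleOne

theorem endMatrix_apply (f : Module.End ℂ (CS n)) (μ ν : PermN n) :
    endMatrix n f μ ν = f (Finsupp.single ν 1) μ := by
  simp [endMatrix, LinearMap.toMatrix_apply]

section SigmaBar

variable {i : ℕ} (h : i + 1 < n)
include h

theorem sigmaBarOp_single (ν : PermN n) (c : ℂ) :
    sigmaBarOp n i (Finsupp.single ν c) = Finsupp.single (swapAt n i h * ν) c := by
  rw [sigmaBarOp, dif_pos h, Finsupp.lmapDomain_apply, Finsupp.mapDomain_single]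

theorem sigmaBarOp_apply (X : CS n) (μ : PermN n) :
    sigmaBarOp n i X μ = X (swapAt n i h * μ) := by
  have hmul : (swapAt n i h * ·) = ⇑(Equiv.mulLeft (swapAt n i h)) := rfl
  rw [sigmaBarOp, dif_pos h, Finsupp.lmapDomain_apply, hmul, Finsupp.mapDomain_equiv_apply]
  rfl

theorem endMatrix_sandwich (f : Module.End ℂ (CS n)) (μ ν : PermN n) :
    endMatrix n ((1 + sigmaBarOp n i) * (f * (1 - sigmaBarOp n i))) μ ν =
      endMatrix n f μ ν + endMatrix n f (swapAt n i h * μ) ν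
        - (endMatrix n f μ (swapAt n i h * ν)
          + endMatrix n f (swapAt n i h * μ) (swapAt n i h * ν)) := by
  simp only [endMatrix_apply, Module.End.mul_apply, LinearMap.sub_apply, LinearMap.add_apply,
    Module.End.one_apply, sigmaBarOp_single h, map_sub, Finsupp.add_apply, Finsupp.sub_apply,
    sigmaBarOp_apply h]

end SigmaBar

theorem mem_sandwichSpace_iff (f : Module.End ℂ (CS n)) :
    f ∈ sandwichSpace n ↔ endMatrix n f ∈ sandwichMatrices n := by
  simp only [sandwichSpace, Submodule.mem_iInf, LinearMap.mem_ker, LinearMap.comp_apply,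
    LinearMap.mulRight_apply, LinearMap.mulLeft_apply, Subtype.forall]
  refine forall_congr' fun i => forall_congr' fun h => ?_
  rw [← (endMatrix n).map_eq_zero_iff, ← Matrix.ext_iff]
  simp only [endMatrix_sandwich h, Matrix.zero_apply, sub_eq_zero]

theorem finrank_sandwichSpace (n : ℕ) :
    Module.finrank ℂ (sandwichSpace n) = Module.finrank ℂ (sandwichMatrices n) := by
  have : sandwichSpace n = (sandwichMatrices n).comap (endMatrix n : _ →ₗ[ℂ] _) := by
    ext f
    exact mem_sandwichSpace_iff f
  rw [this, Submodule.comap_equiv_eq_map_symm, LinearEquiv.finrank_map_eq]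

theorem sandwich_dim_general (n : ℕ) :
    Module.finrank ℂ ↥(sandwichSpace n) =
      Nat.card {p : PermN n × PermN n // Des n p.1 ∩ Des n p.2 = ∅} := by
  rw [finrank_sandwichSpace, finrank_sandwichMatrices, ← Nat.card_eq_fintype_card]
  exact Nat.card_congr ((Equiv.prodCongr (Equiv.inv _) (Equiv.inv _)).subtypeEquiv
    fun _ => Iff.rfl)

/-- The solution space of the sandwich equations has dimension the
number of pairs of permutations with disjoint descent sets. -/
theorem sandwich_dim (n : ℕ) (hn : 1 ≤ n) :
    Module.finrank ℂ ↥(sandwichSpace n) =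
      Nat.card {p : PermN n × PermN n // Des n p.1 ∩ Des n p.2 = ∅} :=
  sandwich_dim_general n
end
end

section
/- The following operator identities hold in End(ℂ𝔖_n) (products composed left to right): for 1 ≤ i ≤ n−2, π_{i+1}σ_i = π_{i+1}π_i + σ_iσ_{i+1}π_iπ_{i+1} − π_iπ_{i+1}π_i and π_iσ_{i+1} = π_iπ_{i+1} + σ_{i+1}σ_iπ_{i+1}π_i − π_iπ_{i+1}π_i; and, for n ≥ 3, σ_1π_2σ_1 = σ_2π_1σ_2. -/
open scoped Classical

set_option maxHeartbeats 1000000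
set_option synthInstance.maxHeartbeats 400000

noncomputable section

/-! The operators `σ_i` and `π_i` send each basis vector `μ` to a basis vector `μ w`, with `w`
depending on `μ` only through the relative order of a few of its entries; the identities are
checked on basis vectors. Conjugating the sorting operator of a pair of positions `(a, b)` by right
multiplication with `τ` gives the sorting operator of `(τ a, τ b)`, so both sides of the third
identity sort the positions `1` and `3`. In the first identity, for each `μ` the left-hand side
equals one of the first two terms on the right while the other one cancels against
`π_i π_{i+1} π_i`, the full decreasing sort of positions `i, i+1, i+2`; which one depends on
whether `μ_i < max(μ_{i+1}, μ_{i+2})`. The second identity is its mirror image. -/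

open Equiv

section SortPerm

variable {α : Type*} [LinearOrder α]

def sortPerm (a b : α) (μ : Perm α) : Perm α :=
  if μ b < μ a then μ else μ * swap a b

theorem sortPerm_mul_inv (τ : Perm α) (a b : α) (μ : Perm α) :
    sortPerm a b (μ * τ) * τ⁻¹ = sortPerm (τ a) (τ b) μ := by
  by_cases h : μ (τ b) < μ (τ a) <;> simp [sortPerm, h, swap_apply_apply, mul_assoc]

variable {a b c : α}

theorem swap_braid (hab : a ≠ b) (hac : a ≠ c) (hbc : b ≠ c) :
    swap a b * swap b c * swap a b = swap b c * swap a b * swap b c := by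
  rw [swap_mul_swap_mul_swap hab hac, swap_comm a b, swap_comm b c,
    swap_mul_swap_mul_swap hbc.symm hac.symm, swap_comm]

theorem sortPerm_snd_mul_swap_fst_cases (hab : a ≠ b) (hac : a ≠ c) (hbc : b ≠ c) (μ : Perm α) :
    (sortPerm b c μ * swap a b = sortPerm a b (sortPerm b c μ) ∧
        sortPerm b c (sortPerm a b (μ * swap a b * swap b c)) =
          sortPerm a b (sortPerm b c (sortPerm a b μ))) ∨
      (sortPerm b c μ * swap a b = sortPerm b c (sortPerm a b (μ * swap a b * swap b c)) ∧
        sortPerm a b (sortPerm b c μ) = sortPerm a b (sortPerm b c (sortPerm a b μ))) := by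
  have braid := swap_braid hab hac hbc
  rcases (μ.injective.ne hab).lt_or_gt with h1 | h1 <;>
    rcases (μ.injective.ne hac).lt_or_gt with h2 | h2 <;>
    rcases (μ.injective.ne hbc).lt_or_gt with h3 | h3 <;>
    simp [sortPerm, Perm.mul_apply, swap_apply_of_ne_of_ne, hab, hac, hbc, hac.symm, hbc.symm,
      h1, h2, h3, h1.not_gt, h2.not_gt, h3.not_gt, mul_assoc, braid] <;>
    order

theorem sortPerm_fst_mul_swap_snd_cases (hab : a ≠ b) (hac : a ≠ c) (hbc : b ≠ c) (μ : Perm α) :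
    (sortPerm a b μ * swap b c = sortPerm b c (sortPerm a b μ) ∧
        sortPerm a b (sortPerm b c (μ * swap b c * swap a b)) =
          sortPerm a b (sortPerm b c (sortPerm a b μ))) ∨
      (sortPerm a b μ * swap b c = sortPerm a b (sortPerm b c (μ * swap b c * swap a b)) ∧
        sortPerm b c (sortPerm a b μ) = sortPerm a b (sortPerm b c (sortPerm a b μ))) := by
  have braid := swap_braid hab hac hbc
  rcases (μ.injective.ne hab).lt_or_gt with h1 | h1 <;>
    rcases (μ.injective.ne hac).lt_or_gt with h2 | h2 <;>
    rcases (μ.injective.ne hbc).lt_or_gt with h3 | h3 <;>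
    simp [sortPerm, Perm.mul_apply, swap_apply_of_ne_of_ne, hab, hac, hbc, hac.symm, hbc.symm,
      h1, h2, h3, h1.not_gt, h2.not_gt, h3.not_gt, mul_assoc, braid] <;>
    order

end SortPerm

section Operators

variable {n : ℕ}

def sortOp (a b : Fin n) : Module.End ℂ (CS n) :=
  Finsupp.lmapDomain ℂ ℂ (sortPerm a b)

theorem piOp_eq_sortOp (i : ℕ) (h : i + 1 < n) : piOp n i = sortOp ⟨i, by omega⟩ ⟨i + 1, h⟩ := by
  rw [piOp, dif_pos h]; rfl

theorem sigmaOp_eq_rightMulOp (i : ℕ) (h : i + 1 < n) :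
    sigmaOp n i = rightMulOp n (swap ⟨i, by omega⟩ ⟨i + 1, h⟩) := by
  rw [sigmaOp, dif_pos h]; rfl

@[simp]
theorem sortOp_single (a b : Fin n) (μ : PermN n) (r : ℂ) :
    sortOp a b (Finsupp.single μ r) = Finsupp.single (sortPerm a b μ) r :=
  Finsupp.mapDomain_single

@[simp]
theorem rightMulOp_single (τ μ : PermN n) (r : ℂ) :
    rightMulOp n τ (Finsupp.single μ r) = Finsupp.single (μ * τ) r :=
  Finsupp.mapDomain_single

theorem rightMulOp_inv_mul_sortOp_mul_rightMulOp (τ : PermN n) (a b : Fin n) :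
    rightMulOp n τ⁻¹ * sortOp a b * rightMulOp n τ = sortOp (τ a) (τ b) := by
  simp only [rightMulOp, sortOp, Module.End.mul_eq_comp, ← Finsupp.lmapDomain_comp]
  congr 1
  funext μ
  exact sortPerm_mul_inv τ a b μ

theorem Finsupp.single_eq_single_add_single_sub_single {α M : Type*} [AddCommGroup M]
    {x y z w : α} (h : (x = y ∧ z = w) ∨ (x = z ∧ y = w)) (r : M) :
    single x r = single y r + single z r - single w r := by
  rcases h with ⟨rfl, rfl⟩ | ⟨rfl, rfl⟩ <;> abel

variable {a b c : Fin n}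

theorem rightMulOp_swap_fst_mul_sortOp_snd (hab : a ≠ b) (hac : a ≠ c) (hbc : b ≠ c) :
    rightMulOp n (swap a b) * sortOp b c =
      sortOp a b * sortOp b c
        + sortOp b c * sortOp a b * rightMulOp n (swap b c) * rightMulOp n (swap a b)
        - sortOp a b * sortOp b c * sortOp a b := by
  refine Finsupp.lhom_ext fun μ r => ?_
  simp only [Module.End.mul_apply, LinearMap.add_apply, LinearMap.sub_apply, sortOp_single,
    rightMulOp_single]
  exact Finsupp.single_eq_single_add_single_sub_single
    (sortPerm_snd_mul_swap_fst_cases hab hac hbc μ) r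

theorem rightMulOp_swap_snd_mul_sortOp_fst (hab : a ≠ b) (hac : a ≠ c) (hbc : b ≠ c) :
    rightMulOp n (swap b c) * sortOp a b =
      sortOp b c * sortOp a b
        + sortOp a b * sortOp b c * rightMulOp n (swap a b) * rightMulOp n (swap b c)
        - sortOp a b * sortOp b c * sortOp a b := by
  refine Finsupp.lhom_ext fun μ r => ?_
  simp only [Module.End.mul_apply, LinearMap.add_apply, LinearMap.sub_apply, sortOp_single,
    rightMulOp_single]
  exact Finsupp.single_eq_single_add_single_sub_single
    (sortPerm_fst_mul_swap_snd_cases hab hac hbc μ) r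

end Operators

theorem operator_identities_general (n : ℕ) :
    (∀ i : ℕ, i + 2 < n →
      sigmaOp n i * piOp n (i+1) =
        piOp n i * piOp n (i+1)
          + piOp n (i+1) * piOp n i * sigmaOp n (i+1) * sigmaOp n i
          - piOp n i * piOp n (i+1) * piOp n i) ∧
    (∀ i : ℕ, i + 2 < n →
      sigmaOp n (i+1) * piOp n i =
        piOp n (i+1) * piOp n i
          + piOp n i * piOp n (i+1) * sigmaOp n i * sigmaOp n (i+1)
          - piOp n i * piOp n (i+1) * piOp n i) ∧
    (3 ≤ n →
      sigmaOp n 0 * piOp n 1 * sigmaOp n 0 = sigmaOp n 1 * piOp n 0 * sigmaOp n 1) := by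
  refine ⟨fun i hi => ?_, fun i hi => ?_, fun hn => ?_⟩
  · rw [sigmaOp_eq_rightMulOp i (by omega), sigmaOp_eq_rightMulOp (i + 1) hi,
      piOp_eq_sortOp i (by omega), piOp_eq_sortOp (i + 1) hi]
    exact rightMulOp_swap_fst_mul_sortOp_snd (by simp) (by simp; omega) (by simp)
  · rw [sigmaOp_eq_rightMulOp i (by omega), sigmaOp_eq_rightMulOp (i + 1) hi,
      piOp_eq_sortOp i (by omega), piOp_eq_sortOp (i + 1) hi]
    exact rightMulOp_swap_snd_mul_sortOp_fst (by simp) (by simp; omega) (by simp)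
  · rw [sigmaOp_eq_rightMulOp 0 (by omega), sigmaOp_eq_rightMulOp 1 hn,
      piOp_eq_sortOp 0 (by omega), piOp_eq_sortOp 1 hn]
    have conj (x y a b : Fin n) := rightMulOp_inv_mul_sortOp_mul_rightMulOp (swap x y) a b
    simp only [swap_inv] at conj
    rw [conj, conj]
    simp [swap_apply_of_ne_of_ne, Fin.ext_iff]

/-- The operator identities (20) of the paper, written in `Module.End`
(where the paper's left-to-right word `f₁f₂⋯f_p` is `f_p * ⋯ * f₂ * f₁`). -/
theorem operator_identities (n : ℕ) (hn : 1 ≤ n) :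
    (∀ i : ℕ, i + 2 < n →
      sigmaOp n i * piOp n (i+1) =
        piOp n i * piOp n (i+1)
          + piOp n (i+1) * piOp n i * sigmaOp n (i+1) * sigmaOp n i
          - piOp n i * piOp n (i+1) * piOp n i) ∧
    (∀ i : ℕ, i + 2 < n →
      sigmaOp n (i+1) * piOp n i =
        piOp n (i+1) * piOp n i
          + piOp n i * piOp n (i+1) * sigmaOp n i * sigmaOp n (i+1)
          - piOp n i * piOp n (i+1) * piOp n i) ∧
    (3 ≤ n →
      sigmaOp n 0 * piOp n 1 * sigmaOp n 0 = sigmaOp n 1 * piOp n 0 * sigmaOp n 1) :=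
  operator_identities_general n

end
end

section
/- The algebra homomorphism from ℂ[NDF_n] to End(⊕_{k=1}^{n} Λ^k ℂ^n) induced by the diagonal action of NDF_n on the exterior powers Λ^1 ℂ^n, …, Λ^n ℂ^n is injective; that is, the representation of ℂ[NDF_n] on ⊕_{k=1}^{n} Λ^k ℂ^n is faithful. -/
open scoped Classical

set_option maxHeartbeats 1000000
set_option synthInstance.maxHeartbeats 400000

noncomputable section

/-- The `k`-th exterior power `Λ^k ℂ^n`, with basis `{e_S}` indexed by the `k`-element
subsets `S` of `{1, …, n}` (modeled as `Fin n`). -/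
abbrev ExtP (n k : ℕ) := {S : Finset (Fin n) // S.card = k} →₀ ℂ

/-- The image of the basis vector `e_S` under a map `g`: `e_{g(S)}` if `|g(S)| = |S|`,
and `0` otherwise. -/
def extImg (n k : ℕ) (g : Fin n → Fin n) (S : {S : Finset (Fin n) // S.card = k}) :
    ExtP n k :=
  if h : (S.1.image g).card = k then Finsupp.single ⟨S.1.image g, h⟩ 1 else 0

/-- The operator on `Λ^k ℂ^n` induced by a map `g : {1,…,n} → {1,…,n}`:
`e_S ↦ e_{g(S)}` if `|g(S)| = |S|` and `e_S ↦ 0` otherwise. -/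
def actOp (n k : ℕ) (g : Fin n → Fin n) : Module.End ℂ (ExtP n k) :=
  Finsupp.lsum ℂ fun S => LinearMap.toSpanSingleton ℂ (ExtP n k) (extImg n k g S)

lemma actOp_single (n k : ℕ) (g : Fin n → Fin n) (S : {S : Finset (Fin n) // S.card = k}) :
    actOp n k g (Finsupp.single S 1) = extImg n k g S := by
  simp [actOp, LinearMap.toSpanSingleton_apply]

lemma actOp_id (n k : ℕ) : actOp n k id = 1 := by
  apply Finsupp.lhom_ext
  intro S c
  have : (Finsupp.single S c : ExtP n k) = c • Finsupp.single S 1 := by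
    rw [Finsupp.smul_single, smul_eq_mul, mul_one]
  rw [this, map_smul, map_smul, actOp_single]
  simp [extImg, S.2]

lemma actOp_comp (n k : ℕ) (f g : Fin n → Fin n) :
    actOp n k (f ∘ g) = actOp n k f * actOp n k g := by
  apply Finsupp.lhom_ext
  intro S c
  have hc : (Finsupp.single S c : ExtP n k) = c • Finsupp.single S 1 := by
    rw [Finsupp.smul_single, smul_eq_mul, mul_one]
  rw [hc, map_smul, map_smul]
  congr 1
  rw [Module.End.mul_apply, actOp_single, actOp_single]
  by_cases h1 : (S.1.image g).card = k
  · rw [show extImg n k g S = Finsupp.single (⟨S.1.image g, h1⟩ :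
        {S : Finset (Fin n) // S.card = k}) 1 from dif_pos h1, actOp_single]
    unfold extImg
    simp only [Finset.image_image]
  · rw [show extImg n k g S = 0 from dif_neg h1, map_zero]
    unfold extImg
    rw [dif_neg]
    intro hcomp
    apply h1
    have h2 := Finset.card_image_le (s := S.1.image g) (f := f)
    have h3 := Finset.card_image_le (s := S.1) (f := g)
    rw [Finset.image_image] at h2
    rw [hcomp] at *
    omega

/-- The monoid `NDFₙ` of non-decreasing functions from `{1, …, n}` to itself, under
composition.  (Left modules over its monoid algebra, with this composition
convention, are exactly the right `ℂ[NDFₙ]`-modules in the paper's left-to-right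
convention.) -/
def NDF (n : ℕ) : Type := {f : Fin n → Fin n // Monotone f}

instance (n : ℕ) : Monoid (NDF n) where
  mul f g := ⟨f.1 ∘ g.1, f.2.comp g.2⟩
  one := ⟨id, monotone_id⟩
  mul_assoc _ _ _ := Subtype.ext rfl
  one_mul _ := Subtype.ext rfl
  mul_one _ := Subtype.ext rfl

/-- The action of `NDFₙ` on the exterior power `Λ^k ℂ^n`, as a monoid morphism into
`End(Λ^k ℂ^n)`. -/
def TN (n k : ℕ) : NDF n →* Module.End ℂ (ExtP n k) where
  toFun f := actOp n k f.1
  map_one' := actOp_id n k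
  map_mul' f g := actOp_comp n k f.1 g.1

noncomputable instance endApplyExt (n k : ℕ) :
    Module (Module.End ℂ (ExtP n k)) (ExtP n k) :=
  Module.End.applyModule

/-- `Λ^k ℂ^n` as a module over the monoid algebra `ℂ[NDFₙ]`. -/
noncomputable instance extModule (n k : ℕ) :
    Module (MonoidAlgebra ℂ (NDF n)) (ExtP n k) :=
  Module.compHom _
    (MonoidAlgebra.lift ℂ (Module.End ℂ (ExtP n k)) (NDF n) (TN n k)).toRingHom

/-- The direct sum `⊕_{k=1}^{n} Λ^k ℂ^n`, with basis indexed by the nonempty subsets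
of `{1, …, n}`. -/
abbrev WSp (n : ℕ) := {S : Finset (Fin n) // S.Nonempty} →₀ ℂ

/-- The image of the basis vector `e_S` under a map `g` in `⊕_k Λ^k ℂ^n`. -/
def extImgW (n : ℕ) (g : Fin n → Fin n) (S : {S : Finset (Fin n) // S.Nonempty}) :
    WSp n :=
  if (S.1.image g).card = S.1.card then Finsupp.single ⟨S.1.image g, S.2.image g⟩ 1 else 0

/-- The operator on `⊕_{k=1}^n Λ^k ℂ^n` induced by a map `g`. -/
def actOpW (n : ℕ) (g : Fin n → Fin n) : Module.End ℂ (WSp n) :=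
  Finsupp.lsum ℂ fun S => LinearMap.toSpanSingleton ℂ (WSp n) (extImgW n g S)

lemma actOpW_single (n : ℕ) (g : Fin n → Fin n) (S : {S : Finset (Fin n) // S.Nonempty}) :
    actOpW n g (Finsupp.single S 1) = extImgW n g S := by
  simp [actOpW, LinearMap.toSpanSingleton_apply]

lemma actOpW_id (n : ℕ) : actOpW n id = 1 := by
  apply Finsupp.lhom_ext
  intro S c
  have : (Finsupp.single S c : WSp n) = c • Finsupp.single S 1 := by
    rw [Finsupp.smul_single, smul_eq_mul, mul_one]
  rw [this, map_smul, map_smul, actOpW_single]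
  simp [extImgW]

lemma actOpW_comp (n : ℕ) (f g : Fin n → Fin n) :
    actOpW n (f ∘ g) = actOpW n f * actOpW n g := by
  apply Finsupp.lhom_ext
  intro S c
  have hc : (Finsupp.single S c : WSp n) = c • Finsupp.single S 1 := by
    rw [Finsupp.smul_single, smul_eq_mul, mul_one]
  rw [hc, map_smul, map_smul]
  congr 1
  rw [Module.End.mul_apply, actOpW_single, actOpW_single]
  by_cases h1 : (S.1.image g).card = S.1.card
  · rw [show extImgW n g S = Finsupp.single (⟨S.1.image g, S.2.image g⟩ :
        {S : Finset (Fin n) // S.Nonempty}) 1 from if_pos h1, actOpW_single]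
    unfold extImgW
    simp only [Finset.image_image, h1]
  · rw [show extImgW n g S = 0 from if_neg h1, map_zero]
    unfold extImgW
    rw [if_neg]
    intro hcomp
    apply h1
    have h2 := Finset.card_image_le (s := S.1.image g) (f := f)
    have h3 := Finset.card_image_le (s := S.1) (f := g)
    rw [Finset.image_image] at h2
    rw [hcomp] at *
    omega

/-- The action of `NDFₙ` on `⊕_{k=1}^n Λ^k ℂ^n`. -/
def TW (n : ℕ) : NDF n →* Module.End ℂ (WSp n) where
  toFun f := actOpW n f.1
  map_one' := actOpW_id n
  map_mul' f g := actOpW_comp n f.1 g.1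

/-!
Let `x ≠ 0` and let `f` be pointwise maximal in the support of `x`. Let `S` be the set of least
elements of the fibres of `f`, so that `f` is injective on `S`. If a monotone `g` maps `S`
injectively onto `f(S)`, then `g = f` on `S` (both are the increasing bijection `S → f(S)`), hence
`f ≤ g` everywhere, since every point lies above the least element of its fibre. By maximality `f`
is the only element of the support sending `e_S` to `e_{f(S)}`, so the `e_{f(S)}`-coefficient of
`x · e_S` is `x_f ≠ 0`.
-/

theorem StrictMonoOn.eqOn_of_image_eq {α β : Type*} [LinearOrder α] [LinearOrder β]
    {f g : α → β} {s : Finset α} (hf : StrictMonoOn f s) (hg : StrictMonoOn g s)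
    (h : s.image f = s.image g) : Set.EqOn f g s := by
  intro x hx
  obtain ⟨i, rfl⟩ : x ∈ Set.range (s.orderEmbOfFin rfl) := by simpa using hx
  have hcard : (s.image f).card = s.card := Finset.card_image_of_injOn hf.injOn
  have hmono {φ : α → β} (hφ : StrictMonoOn φ s) : StrictMono (φ ∘ s.orderEmbOfFin rfl) :=
    fun i j hij => hφ (s.orderEmbOfFin_mem rfl i) (s.orderEmbOfFin_mem rfl j)
      ((s.orderEmbOfFin rfl).strictMono hij)
  -- both `f` and `g` restrict to the increasing enumeration of the common image
  have hfe := Finset.orderEmbOfFin_unique hcard (f := f ∘ s.orderEmbOfFin rfl)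
    (fun i => Finset.mem_image_of_mem f (s.orderEmbOfFin_mem rfl i)) (hmono hf)
  have hge := Finset.orderEmbOfFin_unique hcard (f := g ∘ s.orderEmbOfFin rfl)
    (fun i => h ▸ Finset.mem_image_of_mem g (s.orderEmbOfFin_mem rfl i)) (hmono hg)
  exact congrFun (hfe.trans hge.symm) i

section FiberMins

variable {α β : Type*} [Fintype α] [LinearOrder α]

def fiberMins (f : α → β) : Finset α :=
  Finset.univ.filter fun i => ∀ j, f j = f i → i ≤ j

theorem injOn_fiberMins (f : α → β) : Set.InjOn f (fiberMins f) := by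
  intro i hi j hj hij
  simp only [fiberMins, Finset.coe_filter, Finset.mem_univ, true_and, Set.mem_ofPred_eq] at hi hj
  exact le_antisymm (hi j hij.symm) (hj i hij)

theorem exists_mem_fiberMins_le (f : α → β) (y : α) :
    ∃ s ∈ fiberMins f, s ≤ y ∧ f s = f y := by
  obtain ⟨s, hs, hmin⟩ := (Finset.univ.filter (f · = f y)).exists_min_image id ⟨y, by simp⟩
  simp only [Finset.mem_filter, Finset.mem_univ, true_and, id] at hs hmin
  exact ⟨s, by simpa [fiberMins] using fun j hj => hmin j (hj.trans hs), hmin y rfl, hs⟩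

theorem fiberMins_nonempty [Nonempty α] (f : α → β) : (fiberMins f).Nonempty :=
  let ⟨s, hs, _⟩ := exists_mem_fiberMins_le f (Classical.arbitrary α)
  ⟨s, hs⟩

theorem le_of_image_fiberMins_eq [LinearOrder β] {f g : α → β} (hf : Monotone f)
    (hg : Monotone g) (hinj : Set.InjOn g (fiberMins f))
    (h : (fiberMins f).image g = (fiberMins f).image f) : f ≤ g := by
  have heq : Set.EqOn g f (fiberMins f) :=
    ((hg.monotoneOn _).strictMonoOn_of_injOn hinj).eqOn_of_image_eq
      ((hf.monotoneOn _).strictMonoOn_of_injOn (injOn_fiberMins f)) h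
  intro y
  obtain ⟨s, hs, hsy, hfs⟩ := exists_mem_fiberMins_le f y
  calc f y = f s := hfs.symm
    _ = g s := (heq hs).symm
    _ ≤ g y := hg hsy

end FiberMins

section
variable {n : ℕ}

theorem TW_single_apply (g : NDF n) (S T : {S : Finset (Fin n) // S.Nonempty}) :
    TW n g (Finsupp.single S 1) T =
      if S.1.image g.1 = T.1 ∧ (S.1.image g.1).card = S.1.card then 1 else 0 := by
  change actOpW n g.1 _ T = _
  rw [actOpW_single, extImgW]
  by_cases hc : (S.1.image g.1).card = S.1.card
  · simp [hc, Finsupp.single_apply, Subtype.ext_iff]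
  · simp [hc]

theorem lift_TW_single_apply (x : MonoidAlgebra ℂ (NDF n))
    (S T : {S : Finset (Fin n) // S.Nonempty}) :
    MonoidAlgebra.lift ℂ (Module.End ℂ (WSp n)) (NDF n) (TW n) x (Finsupp.single S 1) T =
      ∑ g ∈ x.coeff.support,
        if S.1.image g.1 = T.1 ∧ (S.1.image g.1).card = S.1.card then x.coeff g else 0 := by
  simp [MonoidAlgebra.lift_apply, Finsupp.sum, Finsupp.finsetSum_apply, TW_single_apply]

theorem lift_TW_single_fiberMins_apply {x : MonoidAlgebra ℂ (NDF n)} {f : NDF n}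
    (hf : MaximalFor (· ∈ x.coeff.support) Subtype.val f) (hS : (fiberMins f.1).Nonempty) :
    MonoidAlgebra.lift ℂ (Module.End ℂ (WSp n)) (NDF n) (TW n) x
      (Finsupp.single ⟨fiberMins f.1, hS⟩ 1) ⟨(fiberMins f.1).image f.1, hS.image _⟩ =
        x.coeff f := by
  rw [lift_TW_single_apply, Finset.sum_eq_single f]
  · simp [Finset.card_image_of_injOn (injOn_fiberMins f.1)]
  · intro g hg hgf
    refine if_neg fun ⟨himg, hcard⟩ => hgf (Subtype.ext ?_)
    have hfg : f.1 ≤ g.1 := le_of_image_fiberMins_eq f.2 g.2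
      (Finset.injOn_of_card_image_eq hcard) himg
    exact le_antisymm (hf.2 hg hfg) hfg
  · intro hf'
    simp [Finsupp.notMem_support_iff.mp hf']

end

/-- **Statement 14.** The representation of `ℂ[NDFₙ]` on `⊕_{k=1}^n Λ^k ℂ^n` is
faithful: the induced algebra homomorphism `ℂ[NDFₙ] → End(⊕_{k=1}^n Λ^k ℂ^n)`
is injective. -/
theorem ndf_exterior_faithful (n : ℕ) (hn : 1 ≤ n) :
    Function.Injective
      (MonoidAlgebra.lift ℂ (Module.End ℂ (WSp n)) (NDF n) (TW n)) := by
  have : Nonempty (Fin n) := ⟨⟨0, hn⟩⟩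
  rw [injective_iff_map_eq_zero]
  intro x hx
  by_contra hx0
  have hsupp : x.coeff.support.Nonempty :=
    Finsupp.support_nonempty_iff.mpr fun h => hx0 (MonoidAlgebra.coeff_eq_zero.mp h)
  obtain ⟨f, hf⟩ := x.coeff.support.exists_maximalFor Subtype.val hsupp
  have hcoeff := lift_TW_single_fiberMins_apply hf (fiberMins_nonempty f.1)
  rw [hx] at hcoeff
  exact Finsupp.mem_support_iff.mp hf.1 hcoeff.symm

end
end
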